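/- arXiv:math/0305384 — 6 statements merged into one kernel-verified Lean document; each statement's English description precedes it below -/
import Mathlib

section
/- An ordered set S is Noetherian if and only if every total ordering on S extending the ordering of S is a well-ordering. -/
/-- An ordered set `S` is Noetherian iff every total ordering on `S` extending the ordering
of `S` is a well-ordering (i.e., admits no infinite strictly decreasing sequence). -/
theorem stmt_2 {S : Type*} [PartialOrder S] :
    (∀ f : ℕ → S, ∃ i j : ℕ, i < j ∧ f i ≤ f j) ↔
    (∀ r : S → S → Prop, IsLinearOrder S r → (∀ x y : S, x ≤ y → r x y) →
      ¬∃ f : ℕ → S, ∀ n : ℕ, r (f (n + 1)) (f n) ∧ f (n + 1) ≠ f n) := by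
  constructor
  · -- Noetherian → every linear extension is well-ordered
    rintro hN r hr hext ⟨f, hf⟩
    -- chain: for i ≤ j, r (f j) (f i)
    have chain : ∀ i j : ℕ, i ≤ j → r (f j) (f i) := by
      intro i j hij
      induction j with
      | zero =>
        obtain rfl := Nat.le_zero.mp hij
        exact hr.toIsPartialOrder.toIsPreorder.refl _
      | succ k ih =>
        rcases Nat.lt_or_ge i (k+1) with h | h
        · exact hr.toIsPartialOrder.toIsPreorder.trans _ _ _ (hf k).1
            (ih (Nat.lt_succ_iff.mp h))
        · have : i = k + 1 := le_antisymm hij h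
          subst this; exact hr.toIsPartialOrder.toIsPreorder.refl _
    have chainne : ∀ i j : ℕ, i < j → f j ≠ f i := by
      intro i j hij heq
      have h1 : r (f (i+1)) (f i) := (hf i).1
      have h2 : r (f j) (f (i+1)) := chain _ _ hij
      rw [heq] at h2
      exact (hf i).2 (hr.toIsPartialOrder.antisymm _ _ h1 h2)
    obtain ⟨i, j, hij, hle⟩ := hN f
    exact chainne i j hij (hr.toIsPartialOrder.antisymm _ _ (chain i j hij.le)
      (hext _ _ hle))
  · -- contrapositive
    intro H f
    by_contra hbad
    push_neg at hbad
    have bad : ∀ i j : ℕ, i < j → ¬ f i ≤ f j := by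
      intro i j hij hle
      exact absurd hle (hbad i j hij)
    -- build partial order extending ≤ with f j ≤ f i for i < j
    set q : S → S → Prop := fun x y => x ≤ y ∨ ∃ i j : ℕ, i < j ∧ x ≤ f j ∧ f i ≤ y with hq
    have hpo : IsPartialOrder S q := by
      refine { refl := ?_, trans := ?_, antisymm := ?_ }
      · intro x; exact Or.inl le_rfl
      · rintro x y z (hxy | ⟨i, j, hij, hxj, hiy⟩) (hyz | ⟨i', j', hij', hyj', hiz'⟩)
        · exact Or.inl (hxy.trans hyz)
        · exact Or.inr ⟨i', j', hij', hxy.trans hyj', hiz'⟩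
        · exact Or.inr ⟨i, j, hij, hxj, hiy.trans hyz⟩
        · -- f i ≤ y ≤ f j'; if i < j' contradiction, else i ≥ j' > i'
          rcases Nat.lt_or_ge i j' with h | h
          · exact absurd (hiy.trans hyj') (bad i j' h)
          · exact Or.inr ⟨i', j, lt_of_lt_of_le hij' (h.trans hij.le), hxj, hiz'⟩
      · rintro x y (hxy | ⟨i, j, hij, hxj, hiy⟩) (hyx | ⟨i', j', hij', hyj', hix'⟩)
        · exact le_antisymm hxy hyx
        · exact absurd (hix'.trans (hxy.trans hyj')) (bad i' j' hij')
        · exact absurd (hiy.trans (hyx.trans hxj)) (bad i j hij)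
        · rcases Nat.lt_or_ge i j' with h | h
          · exact absurd (hiy.trans hyj') (bad i j' h)
          · exact absurd (hix'.trans hxj)
              (bad i' j (lt_of_lt_of_le hij' (h.trans hij.le)))
    obtain ⟨s, hs, hsub⟩ := extend_partialOrder q
    refine H s hs (fun x y hxy => hsub _ _ (Or.inl hxy)) ⟨f, fun n => ⟨?_, ?_⟩⟩
    · exact hsub _ _ (Or.inr ⟨n, n+1, Nat.lt_succ_self n, le_rfl, le_rfl⟩)
    · intro h
      exact bad n (n+1) (Nat.lt_succ_self n) (le_of_eq h.symm)
end

section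
/- If S is a Noetherian ordered set, then the set S^(≥) of infinite decreasing sequences s_0 ≥ s_1 ≥ ... of elements of S, ordered componentwise, is Noetherian. -/
/-!
A Noetherian order is well-founded, so a decreasing sequence `s` is constant from some index
`N` on, and is determined by the finite word `s 0, …, s (N - 1)` together with its limit
`s N`. Given infinitely many such sequences, pass to a subsequence along which the limits
increase, then apply Higman's lemma to the words: if the word of `s` embeds into the word of
`t`, the `n`-th letter of `s` is bounded by a letter of `t` at position `≥ n`, hence by `t n`
since `t` decreases; beyond `N`, `s n = s N` is bounded by the limit of `t`, which is below
every `t n`.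
-/

theorem WellQuasiOrdered.sublistForall₂ {α : Type*} {r : α → α → Prop} [IsPreorder α r]
    (h : WellQuasiOrdered r) : WellQuasiOrdered (List.SublistForall₂ r) := by
  rw [← Set.partiallyWellOrderedOn_univ_iff] at h ⊢
  simpa using h.partiallyWellOrderedOn_sublistForall₂ r

namespace List

variable {α : Type*}

theorem SublistForall₂.length_le {R : α → α → Prop} {l₁ l₂ : List α}
    (h : SublistForall₂ R l₁ l₂) : l₁.length ≤ l₂.length := by
  obtain ⟨l, hl, hsub⟩ := sublistForall₂_iff.1 h
  exact hl.length_eq.trans_le hsub.length_le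

theorem SublistForall₂.getElem_le_of_pairwise_ge [Preorder α] {l₁ l₂ : List α}
    (h : SublistForall₂ (· ≤ ·) l₁ l₂) (hl₂ : l₂.Pairwise (· ≥ ·)) (n : ℕ)
    (hn : n < l₁.length) : l₁[n] ≤ l₂[n]'(hn.trans_le h.length_le) := by
  induction h generalizing n with
  | nil => simp at hn
  | cons hab h ih =>
    cases n with
    | zero => exact hab
    | succ n => exact ih (pairwise_cons.1 hl₂).2 n (by simpa using hn)
  | @cons_right a l₁ l₂ h ih =>
    have hn₂ : n < l₂.length := hn.trans_le h.length_le
    exact (ih (pairwise_cons.1 hl₂).2 n hn).trans <|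
      pairwise_iff_getElem.1 hl₂ n (n + 1) (by simp; omega) (by simpa) n.lt_succ_self

end List

namespace Antitone

variable {S : Type*} [Preorder S] {t : ℕ → S}

theorem le_apply_of_forall_eq (ht : Antitone t) {M : ℕ} (hM : ∀ n, M ≤ n → t M = t n)
    (n : ℕ) : t M ≤ t n := by
  rcases le_total n M with h | h
  · exact ht h
  · exact (hM n h).le

theorem pairwise_map_range (ht : Antitone t) (M : ℕ) :
    ((List.range M).map t).Pairwise (· ≥ ·) :=
  List.pairwise_map.2 <| List.pairwise_lt_range.imp fun h => ht h.le

theorem le_of_sublistForall₂_range {s : ℕ → S} (ht : Antitone t) {N M : ℕ}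
    (hs : ∀ n, N ≤ n → s N = s n) (hlim : ∀ n, s N ≤ t n)
    (hpre : List.SublistForall₂ (· ≤ ·) ((List.range N).map s) ((List.range M).map t)) :
    s ≤ t := by
  intro n
  rcases lt_or_ge n N with hn | hn
  · convert hpre.getElem_le_of_pairwise_ge (ht.pairwise_map_range M) n (by simpa) using 1 <;>
      simp
  · exact (hs n hn).ge.trans (hlim n)

end Antitone

/-- If `S` is Noetherian, then the set `S^(≥)` of infinite decreasing sequences in `S`,
ordered componentwise, is Noetherian. -/
theorem stmt_6 {S : Type*} [PartialOrder S]
    (hS : ∀ f : ℕ → S, ∃ i j : ℕ, i < j ∧ f i ≤ f j) :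
    ∀ F : ℕ → {s : ℕ → S // Antitone s},
      ∃ i j : ℕ, i < j ∧ ∀ n : ℕ, (F i).1 n ≤ (F j).1 n := by
  intro F
  have : WellQuasiOrderedLE S := ⟨hS⟩
  choose N hN using fun k => WellFoundedLT.antitone_chain_condition (F k).2
  obtain ⟨g, hlim⟩ := wellQuasiOrdered_le.exists_monotone_subseq fun k => (F k).1 (N k)
  obtain ⟨m, n, hmn, hpre⟩ := wellQuasiOrdered_le.sublistForall₂
    fun k => (List.range (N (g k))).map (F (g k)).1
  refine ⟨g m, g n, g.strictMono hmn, (F (g n)).2.le_of_sublistForall₂_range (hN _) ?_ hpre⟩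
  exact fun p => (hlim m n hmn.le).trans ((F (g n)).2.le_apply_of_forall_eq (hN _) p)
end

section
/- If S and T are ordered sets such that F(S) and F(T) are both Noetherian, then F(S × T) is Noetherian. -/
/-!
If `F(S)` and `F(T)` are Noetherian then `S` and `T` are well-quasi-ordered (look at the principal
final segments), hence so is `S × T`, and every final segment of `S × T` is generated by finitely
many elements. Its complement is then a finite union of rectangles `A × B` with `A`, `B` initial
segments. Initial segments of `S` and of `T` are well-quasi-ordered by inclusion, so by Higman's
lemma, for any sequence of such finite lists of rectangles some list has each of its rectangles
inside a rectangle of a later list; the complements of the corresponding final segments are then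
nested.
-/

open Set

/-- `F(X)`, the final segments of `X` ordered by reverse inclusion, is Noetherian. -/
def UpperSetsNoetherian (X : Type*) [LE X] : Prop :=
  ∀ F : ℕ → {A : Set X // IsUpperSet A}, ∃ i j : ℕ, i < j ∧ (F j : Set X) ⊆ (F i : Set X)

namespace UpperSetsNoetherian

variable {X : Type*}

theorem isPWO_univ [Preorder X] (h : UpperSetsNoetherian X) : (univ : Set X).IsPWO := by
  refine partiallyWellOrderedOn_iff_exists_lt.2 fun f _ => ?_
  obtain ⟨i, j, hij, hsub⟩ := h fun n => ⟨Ici (f n), isUpperSet_Ici _⟩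
  exact ⟨i, j, hij, hsub (mem_Ici.2 le_rfl)⟩

theorem isPWO_setOf_isLowerSet [LE X] (h : UpperSetsNoetherian X) :
    {A : Set X | IsLowerSet A}.IsPWO := by
  refine partiallyWellOrderedOn_iff_exists_lt.2 fun f hf => ?_
  obtain ⟨i, j, hij, hsub⟩ := h fun n => ⟨(f n)ᶜ, (hf n).compl⟩
  exact ⟨i, j, hij, compl_subset_compl.1 hsub⟩

end UpperSetsNoetherian

theorem Set.IsPWO.exists_list_eq_biUnion_Ici {X : Type*} [PartialOrder X]
    (hX : (univ : Set X).IsPWO) {U : Set X} (hU : IsUpperSet U) :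
    ∃ l : List X, U = ⋃ x ∈ l, Ici x := by
  have hfin : {x | Minimal (· ∈ U) x}.Finite :=
    (setOfPred_minimal_antichain _).finite_of_partiallyWellOrderedOn (hX.mono (subset_univ _))
  refine ⟨hfin.toFinset.toList, Subset.antisymm (fun x hx => ?_) ?_⟩
  · obtain ⟨m, hmx, hm⟩ := (hX.mono (subset_univ U)).exists_le_minimal hx
    exact mem_iUnion₂.2 ⟨m, by simpa using hm, hmx⟩
  · simp only [Finset.mem_toList, Finite.mem_toFinset, iUnion_subset_iff]
    exact fun m hm x hmx => hU hmx hm.prop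

section Rectangles

variable {S T : Type*}

/-- Distributes `(Ici x)ᶜ = (Ici x.1)ᶜ ×ˢ univ ∪ univ ×ˢ (Ici x.2)ᶜ` over the intersection
`⋂ x ∈ l, (Ici x)ᶜ`. -/
def complRects [Preorder S] [Preorder T] : List (S × T) → List (Set S × Set T)
  | [] => [(univ, univ)]
  | x :: l =>
      (complRects l).map (fun p => ((Ici x.1)ᶜ ∩ p.1, p.2)) ++
      (complRects l).map (fun p => (p.1, (Ici x.2)ᶜ ∩ p.2))

theorem isLowerSet_of_mem_complRects [Preorder S] [Preorder T] :
    ∀ {l : List (S × T)} {p : Set S × Set T}, p ∈ complRects l → IsLowerSet p.1 ∧ IsLowerSet p.2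
  | [], p, hp => by
      obtain rfl := List.mem_singleton.1 hp
      exact ⟨isLowerSet_univ, isLowerSet_univ⟩
  | x :: l, p, hp => by
      simp only [complRects, List.mem_append, List.mem_map] at hp
      rcases hp with ⟨q, hq, rfl⟩ | ⟨q, hq, rfl⟩
      · have := isLowerSet_of_mem_complRects hq
        exact ⟨(isUpperSet_Ici x.1).compl.inter this.1, this.2⟩
      · have := isLowerSet_of_mem_complRects hq
        exact ⟨this.1, (isUpperSet_Ici x.2).compl.inter this.2⟩

theorem biUnion_complRects [Preorder S] [Preorder T] (l : List (S × T)) :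
    ⋃ p ∈ complRects l, p.1 ×ˢ p.2 = (⋃ x ∈ l, Ici x)ᶜ := by
  induction l with
  | nil => simp [complRects]
  | cons x l ih =>
    ext ⟨a, b⟩
    have ih' := congrArg ((a, b) ∈ ·) ih
    simp only [mem_iUnion, mem_prod, exists_prop, mem_compl_iff, mem_Ici, not_exists, not_and,
      eq_iff_iff] at ih'
    simp only [complRects, List.mem_append, List.mem_map, mem_iUnion, mem_prod, exists_prop,
      mem_compl_iff, mem_Ici, not_exists, not_and, List.forall_mem_cons, ← ih']
    simp only [or_and_right, exists_or, exists_exists_and_eq_and, mem_inter_iff, mem_compl_iff,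
      mem_Ici, Prod.le_def, not_and_or]
    grind

theorem biUnion_prod_subset_of_sublistForall₂ {l₁ l₂ : List (Set S × Set T)}
    (h : List.SublistForall₂ (· ≤ ·) l₁ l₂) :
    ⋃ p ∈ l₁, p.1 ×ˢ p.2 ⊆ ⋃ p ∈ l₂, p.1 ×ˢ p.2 := by
  induction h with
  | nil => simp
  | cons hab _ ih =>
    simp only [List.mem_cons, iUnion_iUnion_eq_or_left]
    exact union_subset_union (prod_mono hab.1 hab.2) ih
  | cons_right _ ih =>
    simp only [List.mem_cons, iUnion_iUnion_eq_or_left]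
    exact ih.trans subset_union_right

end Rectangles

/-- If the sets of final segments of `S` and of `T` (ordered by reverse inclusion) are
both Noetherian, then so is the set of final segments of `S × T`. -/
theorem stmt_9 {S T : Type*} [PartialOrder S] [PartialOrder T]
    (hS : ∀ F : ℕ → {A : Set S // IsUpperSet A},
      ∃ i j : ℕ, i < j ∧ (F j : Set S) ⊆ (F i : Set S))
    (hT : ∀ F : ℕ → {A : Set T // IsUpperSet A},
      ∃ i j : ℕ, i < j ∧ (F j : Set T) ⊆ (F i : Set T)) :
    ∀ F : ℕ → {A : Set (S × T) // IsUpperSet A},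
      ∃ i j : ℕ, i < j ∧ (F j : Set (S × T)) ⊆ (F i : Set (S × T)) := by
  intro F
  have hwqo : (univ : Set (S × T)).IsPWO := by
    simpa only [univ_prod_univ] using
      (UpperSetsNoetherian.isPWO_univ hS).prod (UpperSetsNoetherian.isPWO_univ hT)
  choose L hL using fun n => hwqo.exists_list_eq_biUnion_Ici (F n).2
  have higman := ((UpperSetsNoetherian.isPWO_setOf_isLowerSet hS).prod
    (UpperSetsNoetherian.isPWO_setOf_isLowerSet hT)).partiallyWellOrderedOn_sublistForall₂ (· ≤ ·)
  obtain ⟨i, j, hij, hsub⟩ :=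
    higman.exists_lt (f := fun n => complRects (L n)) fun n _ hp => isLowerSet_of_mem_complRects hp
  refine ⟨i, j, hij, ?_⟩
  rw [hL i, hL j, ← compl_subset_compl, ← biUnion_complRects, ← biUnion_complRects]
  exact biUnion_prod_subset_of_sublistForall₂ hsub
end

section
/- Let φ : S → T be a decreasing map between ordered sets with S Noetherian and T well-founded. Then the image of φ is finite. -/
/-! Distinct values of `φ` along a sequence in `S` have, by Noetherianity, a subsequence on which
the arguments increase; there the values strictly decrease, which well-foundedness of `T`
forbids. -/

theorem Set.Infinite.exists_injective_comp {α β : Type*} {f : α → β}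
    (hf : (Set.range f).Infinite) : ∃ x : ℕ → α, Function.Injective (f ∘ x) := by
  choose x hx using fun n ↦ (hf.natEmbedding _ n).2
  refine ⟨x, fun m n hmn ↦ (hf.natEmbedding _).injective (Subtype.ext ?_)⟩
  simpa only [Function.comp_apply, hx] using hmn

theorem Antitone.finite_range {S T : Type*} [Preorder S] [WellQuasiOrderedLE S]
    [PartialOrder T] [WellFoundedLT T] {φ : S → T} (hφ : Antitone φ) :
    (Set.range φ).Finite := by
  by_contra hinf
  obtain ⟨x, hx⟩ := Set.Infinite.exists_injective_comp hinf
  obtain ⟨g, hg⟩ := wellQuasiOrdered_le.exists_monotone_subseq x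
  have hmono : Monotone (x ∘ g) := fun m n hmn ↦ hg m n hmn
  exact not_strictAnti_of_wellFoundedLT _
    ((hφ.comp_monotone hmono).strictAnti_of_injective (hx.comp g.injective))

/-- A decreasing map `φ : S → T` with `S` Noetherian and `T` well-founded has
finite image. -/
theorem stmt_11 {S T : Type*} [PartialOrder S] [PartialOrder T]
    (φ : S → T) (hφ : Antitone φ)
    (hS : ∀ f : ℕ → S, ∃ i j : ℕ, i < j ∧ f i ≤ f j)
    (hT : ¬∃ g : ℕ → T, ∀ n : ℕ, g (n + 1) < g n) :
    (Set.range φ).Finite := by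
  have : WellQuasiOrderedLE S := ⟨hS⟩
  have : WellFoundedLT T :=
    ⟨wellFounded_iff_isEmpty_descending_chain.mpr ⟨fun ⟨g, hg⟩ ↦ hT ⟨g, hg⟩⟩⟩
  exact hφ.finite_range
end

section
/- If S is a Noetherian ordered set whose height hgt(S) is a limit ordinal, then the minimal order type of S (the least ordinal α such that the ordering of S extends to a well-ordering of order type α) equals hgt(S). -/
/-!
Heights are strictly monotone, so in any well-ordering `r` extending the order of `S` an
induction gives `hgt x ≤ typein r x`, whence `hgt(S) ≤ type r`.

Conversely, each level `{x | hgt x = β}` is an antichain, hence finite because `S` is well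
quasi-ordered. Order `S` by height, breaking ties by an arbitrary well-order, and send `x` with
`ω * q ≤ hgt x < ω * (q + 1)` to `ω * q` plus the number of its predecessors in that ω-block.
Finitely many levels meet the block below `x`, so this is a strictly monotone map into the
ordinals, and as `hgt(S)` is a limit its values stay below `hgt(S)`.
-/

universe u

open Ordinal

namespace Ordinal

theorem type_le_of_strictMono {S : Type u} {r : S → S → Prop} [IsWellOrder S r]
    {o : Ordinal.{u}} (f : S → Ordinal.{u}) (hf : ∀ x y, r x y → f x < f y) (ho : ∀ x, f x < o) :
    type r ≤ o := by
  rw [← type_toType o]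
  exact type_le_iff'.2 ⟨RelEmbedding.ofMonotone (fun x => ToType.mk ⟨f x, ho x⟩)
    fun x y h => ToType.mk.lt_iff_lt.2 (hf x y h)⟩

theorem finite_setOf_div_omega0_eq_and_le (γ : Ordinal) :
    {β : Ordinal | β / ω = γ / ω ∧ β ≤ γ}.Finite := by
  obtain ⟨n, hn⟩ := lt_omega0.1 (mod_lt γ omega0_ne_zero)
  refine ((Set.finite_Iic n).image fun m : ℕ => ω * (γ / ω) + m).subset ?_
  rintro β ⟨hdiv, hle⟩
  obtain ⟨m, hm⟩ := lt_omega0.1 (mod_lt β omega0_ne_zero)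
  have hβ : ω * (γ / ω) + m = β := by rw [← hdiv, ← hm, div_add_mod]
  refine ⟨m, ?_, hβ⟩
  rw [← hβ] at hle
  conv_rhs at hle => rw [← div_add_mod γ ω, hn]
  exact_mod_cast (add_le_add_iff_left _).1 hle

end Ordinal

theorem StrictMono.finite_preimage_singleton {S α : Type*} [PartialOrder S] [Preorder α]
    {f : S → α} (hf : StrictMono f) (hS : WellQuasiOrdered (α := S) (· ≤ ·)) (a : α) :
    (f ⁻¹' {a}).Finite :=
  IsAntichain.finite_of_wellQuasiOrdered
    (fun _ hx _ hy hne hle => (hf (hle.lt_of_ne hne)).ne (hx.trans hy.symm)) hS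

section heightLex

variable {S β : Type*} [LinearOrder β] {h : S → β}

def heightLex (h : S → β) : S → S → Prop :=
  (fun x => (h x, x)) ⁻¹'o Prod.Lex (· < ·) WellOrderingRel

instance heightLex.isWellOrder [WellFoundedLT β] (h : S → β) : IsWellOrder S (heightLex h) :=
  (RelEmbedding.preimage ⟨fun x => (h x, x), fun _ _ hxy => congrArg Prod.snd hxy⟩ _).isWellOrder

theorem heightLex_of_lt {x y : S} (hxy : h x < h y) : heightLex h x y :=
  Prod.Lex.left _ _ hxy

theorem le_of_heightLex {x y : S} (hxy : heightLex h x y) : h x ≤ h y := by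
  rcases Prod.lex_def.1 hxy with hlt | ⟨heq, -⟩
  exacts [hlt.le, heq.le]

end heightLex

section blockIndex

variable {S : Type*} (r : S → S → Prop) (b : S → Ordinal)

noncomputable def blockIndex (x : S) : Ordinal :=
  ω * b x + {y | r y x ∧ b y = b x}.ncard

variable {r b}

theorem blockIndex_lt_blockIndex [IsStrictOrder S r] (hb : ∀ x y, r x y → b x ≤ b y)
    (hfin : ∀ x, {y | r y x ∧ b y = b x}.Finite) {x y : S} (hxy : r x y) :
    blockIndex r b x < blockIndex r b y := by
  rcases (hb x y hxy).lt_or_eq with hlt | heq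
  · calc blockIndex r b x < ω * b x + ω := add_lt_add_right (natCast_lt_omega0 _) _
      _ = ω * (b x + 1) := by rw [mul_add_one]
      _ ≤ ω * b y := mul_le_mul_right (Order.add_one_le_iff.2 hlt) _
      _ ≤ blockIndex r b y := le_self_add
  · have hsub : {z | r z x ∧ b z = b x} ⊂ {z | r z y ∧ b z = b x} :=
      ⟨fun z hz => ⟨_root_.trans hz.1 hxy, hz.2⟩, fun h => irrefl x (h ⟨hxy, rfl⟩).1⟩
    have hfin_y := hfin y
    rw [← heq] at hfin_y
    rw [blockIndex, blockIndex, ← heq]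
    exact add_lt_add_right (Nat.cast_lt.2 (Set.ncard_lt_ncard hsub hfin_y)) _

theorem blockIndex_lt_of_isSuccLimit {o : Ordinal} (ho : Order.IsSuccLimit o) {x : S}
    (hx : ω * b x < o) : blockIndex r b x < o :=
  ho.add_natCast_lt hx _

end blockIndex

section height

variable {S : Type u} [PartialOrder S] {hgt : S → Ordinal.{u}}
  (Hhgt : ∀ x : S, hgt x = sSup ((fun y => hgt y + 1) '' {y : S | y < x}))
include Hhgt

theorem strictMono_height : StrictMono hgt := fun x y hxy =>
  Order.add_one_le_iff.1 (Hhgt y ▸ le_csSup bddAbove_of_small ⟨x, hxy, rfl⟩)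

theorem height_le_typein (r : S → S → Prop) [IsWellOrder S r] (hext : ∀ x y, x < y → r x y)
    (x : S) : hgt x ≤ typein r x := by
  induction x using (IsWellFounded.wf (r := r)).induction with
  | _ x ih =>
    rw [Hhgt x]
    refine csSup_le' ?_
    rintro _ ⟨y, hyx, rfl⟩
    exact Order.add_one_le_iff.2 ((ih y (hext y x hyx)).trans_lt
      ((typein_lt_typein r).2 (hext y x hyx)))

theorem sSup_height_add_one_le_type (r : S → S → Prop) [IsWellOrder S r]
    (hext : ∀ x y, x < y → r x y) : sSup (Set.range fun x : S => hgt x + 1) ≤ type r :=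
  csSup_le' <| Set.forall_mem_range.2 fun x =>
    Order.add_one_le_iff.2 ((height_le_typein Hhgt r hext x).trans_lt (typein_lt_type r x))

end height

/-- If `S` is a Noetherian ordered set whose height is a limit ordinal, then the minimal
order type of `S` (the least order type of a well-ordering extending the ordering of `S`)
equals the height of `S`. -/
theorem stmt_16 {S : Type u} [PartialOrder S]
    (hNoeth : ∀ f : ℕ → S, ∃ i j : ℕ, i < j ∧ f i ≤ f j)
    (hgt : S → Ordinal.{u})
    (Hhgt : ∀ x : S, hgt x = sSup ((fun y => hgt y + 1) '' {y : S | y < x}))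
    (hlim : Order.IsSuccLimit (sSup (Set.range fun x : S => hgt x + 1))) :
    IsLeast {α : Ordinal.{u} | ∃ (r : S → S → Prop) (hwo : IsWellOrder S r),
        (∀ x y : S, x < y → r x y) ∧ @Ordinal.type S r hwo = α}
      (sSup (Set.range fun x : S => hgt x + 1)) := by
  have hmono := strictMono_height Hhgt
  have hltH (x : S) : hgt x < sSup (Set.range fun x : S => hgt x + 1) :=
    (Order.lt_add_one_iff.2 le_rfl).trans_le (le_ciSup bddAbove_of_small x)
  have hblock (x : S) : {y | heightLex hgt y x ∧ hgt y / ω = hgt x / ω}.Finite :=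
    ((finite_setOf_div_omega0_eq_and_le (hgt x)).preimage' fun β _ =>
      hmono.finite_preimage_singleton hNoeth β).subset fun y hy => ⟨hy.2, le_of_heightLex hy.1⟩
  have hext (x y : S) (hxy : x < y) : heightLex hgt x y := heightLex_of_lt (hmono hxy)
  refine ⟨⟨heightLex hgt, inferInstance, hext, le_antisymm ?_
    (sSup_height_add_one_le_type Hhgt _ hext)⟩, ?_⟩
  · exact type_le_of_strictMono _
      (fun _ _ => blockIndex_lt_blockIndex (fun x y h => div_le_left (le_of_heightLex h) ω) hblock)
      fun x => blockIndex_lt_of_isSuccLimit hlim ((mul_div_le _ _).trans_lt (hltH x))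
  · rintro _ ⟨r, _, hext, rfl⟩
    exact sSup_height_add_one_le_type Hhgt r hext
end

section
/- Let p(T) = a(T+1) + b with integers a ≠ 0 and b. Then p is the Hilbert-Samuel polynomial of a non-empty final segment of ℕ² if and only if a > 0 and b + C(a,2) ≥ 0, where C(a,2) = a(a-1)/2. -/
/-- The slice of the complement of `E` on diagonal `t`, as a set of first coordinates. -/
def HSAset (E : Set (ℕ × ℕ)) (t : ℕ) : Set ℕ := {i | i ≤ t ∧ (i, t - i) ∉ E}

lemma HSAset_finite (E : Set (ℕ × ℕ)) (t : ℕ) : (HSAset E t).Finite :=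
  (Set.finite_Iic t).subset (fun _ hi => hi.1)

lemma HStri_finite (P : ℕ × ℕ → Prop) (s : ℕ) : {ν : ℕ × ℕ | P ν ∧ ν.1 + ν.2 ≤ s}.Finite := by
  refine (Set.finite_Iic ((s, s) : ℕ × ℕ)).subset ?_
  rintro ⟨x, y⟩ ⟨-, h⟩
  exact ⟨by simpa using by omega, by simpa using by omega⟩

lemma HSD_finite (E : Set (ℕ × ℕ)) (t : ℕ) : {ν : ℕ × ℕ | ν ∉ E ∧ ν.1 + ν.2 = t}.Finite := by
  refine (HStri_finite (fun ν => ν ∉ E) t).subset ?_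
  rintro ν ⟨h1, h2⟩
  exact ⟨h1, by omega⟩

lemma HSDcard (E : Set (ℕ × ℕ)) (t : ℕ) :
    {ν : ℕ × ℕ | ν ∉ E ∧ ν.1 + ν.2 = t}.ncard = (HSAset E t).ncard := by
  have himg : {ν : ℕ × ℕ | ν ∉ E ∧ ν.1 + ν.2 = t} = (fun i => (i, t - i)) '' (HSAset E t) := by
    ext ν
    constructor
    · rintro ⟨hne, hsum⟩
      refine ⟨ν.1, ⟨by omega, ?_⟩, ?_⟩
      · rwa [show t - ν.1 = ν.2 by omega, Prod.mk.eta]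
      · show (ν.1, t - ν.1) = ν
        rw [show t - ν.1 = ν.2 by omega, Prod.mk.eta]
    · rintro ⟨i, ⟨hi, hni⟩, rfl⟩
      exact ⟨hni, by simp; omega⟩
  rw [himg, Set.ncard_image_of_injOn]
  intro x _ y _ h
  simpa using congrArg Prod.fst h

lemma HSN_eq_sum (E : Set (ℕ × ℕ)) (s : ℕ) :
    {ν : ℕ × ℕ | ν ∉ E ∧ ν.1 + ν.2 ≤ s}.ncard = ∑ t ∈ Finset.range (s + 1), (HSAset E t).ncard := by
  induction s with
  | zero =>
      rw [Finset.sum_range_one, ← HSDcard]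
      congr 1
      ext ν
      simp only [Set.mem_setOf_eq]
      constructor <;> rintro ⟨h1, h2⟩ <;> exact ⟨h1, by omega⟩
  | succ s ih =>
      rw [Finset.sum_range_succ, ← ih, ← HSDcard]
      rw [← Set.ncard_union_eq ?disj (HStri_finite _ s) (HSD_finite E (s+1))]
      case disj =>
        rw [Set.disjoint_left]
        rintro ν ⟨-, h1⟩ ⟨-, h2⟩
        omega
      · congr 1
        ext ν
        simp only [Set.mem_union, Set.mem_setOf_eq]
        constructor
        · rintro ⟨h, hs⟩
          rcases Nat.lt_or_ge (ν.1 + ν.2) (s+1) with h' | h'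
          · exact Or.inl ⟨h, by omega⟩
          · exact Or.inr ⟨h, by omega⟩
        · rintro (⟨h, hs⟩ | ⟨h, hs⟩) <;> exact ⟨h, by omega⟩

/-- Key step: the diagonal slice of a lower set cannot shrink too fast going down. -/
lemma HSstep (E : Set (ℕ × ℕ)) (hE : IsUpperSet E) (t : ℕ) :
    min (HSAset E (t + 1)).ncard (t + 1) ≤ (HSAset E t).ncard := by
  by_cases hfull : ∀ g, g ≤ t + 1 → g ∈ HSAset E (t + 1)
  · have hsub : Set.Iic t ⊆ HSAset E t := by
      intro i hi
      have hit : i ≤ t := hi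
      have h1 : (i, t + 1 - i) ∉ E := (hfull i (by omega)).2
      refine ⟨hit, fun hmem => h1 ?_⟩
      exact hE (Prod.mk_le_mk.mpr ⟨le_rfl, by omega⟩) hmem
    calc min (HSAset E (t + 1)).ncard (t + 1) ≤ t + 1 := min_le_right _ _
      _ = (Set.Iic t).ncard := by rw [← Finset.coe_Iic, Set.ncard_coe_finset, Nat.card_Iic]
      _ ≤ (HSAset E t).ncard := Set.ncard_le_ncard hsub (HSAset_finite E t)
  · push_neg at hfull
    obtain ⟨g, hg, hgn⟩ := hfull
    set f : ℕ → ℕ := fun i => if i < g then i else i - 1 with hf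
    have hne : ∀ i ∈ HSAset E (t + 1), i ≠ g := by
      intro i hi h
      exact hgn (h ▸ hi)
    have hmaps : ∀ i ∈ HSAset E (t + 1), f i ∈ HSAset E t := by
      intro i hi
      obtain ⟨hi1, hi2⟩ := hi
      have hig : i ≠ g := hne i ⟨hi1, hi2⟩
      by_cases hlt : i < g
      · have hfi : f i = i := if_pos hlt
        rw [hfi]
        refine ⟨by omega, fun hmem => hi2 ?_⟩
        exact hE (Prod.mk_le_mk.mpr ⟨le_rfl, by omega⟩) hmem
      · have hgi : g < i := by omega
        have hfi : f i = i - 1 := if_neg hlt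
        rw [hfi]
        refine ⟨by omega, fun hmem => hi2 ?_⟩
        rw [show t - (i - 1) = t + 1 - i by omega] at hmem
        exact hE (Prod.mk_le_mk.mpr ⟨by omega, le_rfl⟩) hmem
    have hinj : Set.InjOn f (HSAset E (t + 1)) := by
      intro x hx y hy hxy
      have hxg := hne x hx
      have hyg := hne y hy
      simp only [hf] at hxy
      split_ifs at hxy <;> omega
    calc min (HSAset E (t + 1)).ncard (t + 1) ≤ (HSAset E (t + 1)).ncard := min_le_left _ _
      _ = (f '' HSAset E (t + 1)).ncard := (Set.ncard_image_of_injOn hinj).symm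
      _ ≤ (HSAset E t).ncard :=
          Set.ncard_le_ncard (Set.image_subset_iff.mpr hmaps) (HSAset_finite E t)

/-- Gauss-type sum: `∑_{t<n} min A (t+1)` in subtraction-free form. -/
lemma HSgauss (A : ℕ) : ∀ n, A ≤ n →
    (∑ t ∈ Finset.range n, min A (t + 1)) * 2 + A * A = 2 * A * n + A := by
  intro n hn
  induction n, hn using Nat.le_induction with
  | base =>
      have h1 : ∑ t ∈ Finset.range A, min A (t + 1) = ∑ t ∈ Finset.range A, (t + 1) :=
        Finset.sum_congr rfl (fun t ht => by have := Finset.mem_range.mp ht; omega)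
      have h2 : (∑ t ∈ Finset.range (A + 1), t) * 2 = (A + 1) * A :=
        Finset.sum_range_id_mul_two (A + 1)
      have h3 : ∑ t ∈ Finset.range (A + 1), t = (∑ t ∈ Finset.range A, (t + 1)) + 0 :=
        Finset.sum_range_succ' _ A
      rw [h3, add_zero] at h2
      rw [h1, h2]
      ring
  | succ n hn ih =>
      rw [Finset.sum_range_succ, show min A (n + 1) = A by omega]
      calc (∑ t ∈ Finset.range n, min A (t + 1) + A) * 2 + A * A
          = ((∑ t ∈ Finset.range n, min A (t + 1)) * 2 + A * A) + 2 * A := by ring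
        _ = 2 * A * n + A + 2 * A := by rw [ih]
        _ = 2 * A * (n + 1) + A := by ring

/-- `p(T) = a(T+1) + b` (with integers `a ≠ 0`, `b`) is the Hilbert-Samuel polynomial of a
non-empty final segment of `ℕ²` iff `a > 0` and `b + C(a, 2) ≥ 0`. -/
theorem stmt_19 (a b : ℤ) (ha : a ≠ 0) :
    (∃ E : Set (ℕ × ℕ), E.Nonempty ∧ IsUpperSet E ∧
      ∀ᶠ s : ℕ in Filter.atTop,
        ({ν : ℕ × ℕ | ν ∉ E ∧ ν.1 + ν.2 ≤ s}.ncard : ℤ) = a * ((s : ℤ) + 1) + b) ↔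
    (0 < a ∧ 0 ≤ b + a * (a - 1) / 2) := by
  obtain ⟨e, he⟩ : ∃ e, a * (a - 1) = 2 * e := by
    obtain ⟨c, hc⟩ := Int.even_mul_succ_self (a - 1)
    exact ⟨c, by linear_combination hc⟩
  have hdiv : a * (a - 1) / 2 = e := by rw [he]; omega
  constructor
  · rintro ⟨E, hEne, hup, hev⟩
    rw [Filter.eventually_atTop] at hev
    obtain ⟨T, hT⟩ := hev
    have hslope : ∀ s, T ≤ s → ((HSAset E (s + 1)).ncard : ℤ) = a := by
      intro s hs
      have h1 := hT s hs
      have h2 := hT (s + 1) (by omega)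
      have h3 : ({ν : ℕ × ℕ | ν ∉ E ∧ ν.1 + ν.2 ≤ s + 1}.ncard : ℤ)
          = ({ν : ℕ × ℕ | ν ∉ E ∧ ν.1 + ν.2 ≤ s}.ncard : ℤ) + (HSAset E (s + 1)).ncard := by
        rw [HSN_eq_sum E (s + 1), HSN_eq_sum E s, Finset.sum_range_succ]
        push_cast
        ring
      rw [h1, h2] at h3
      push_cast at h3
      linarith
    have hapos : 0 < a := by
      have h := hslope T le_rfl
      omega
    set A : ℕ := a.toNat with hA'
    have hAa : (A : ℤ) = a := Int.toNat_of_nonneg hapos.le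
    have hdAeq : ∀ u, T + 1 ≤ u → (HSAset E u).ncard = A := by
      intro u hu
      have h := hslope (u - 1) (by omega)
      rw [show u - 1 + 1 = u by omega] at h
      omega
    set S := T + A with hS'
    have hmin : ∀ j t, t + j = S + 1 → min A (t + 1) ≤ (HSAset E t).ncard := by
      intro j
      induction j with
      | zero =>
          intro t ht
          have h : t = S + 1 := by omega
          subst h
          rw [hdAeq (S + 1) (by omega)]
          omega
      | succ j ih =>
          intro t ht
          have h1 := ih (t + 1) (by omega)
          have h2 := HSstep E hup t
          omega
    have hle : ∑ t ∈ Finset.range (S + 1), min A (t + 1)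
        ≤ {ν : ℕ × ℕ | ν ∉ E ∧ ν.1 + ν.2 ≤ S}.ncard := by
      rw [HSN_eq_sum]
      refine Finset.sum_le_sum (fun t ht => ?_)
      have htS := Finset.mem_range.mp ht
      exact hmin (S + 1 - t) t (by omega)
    have hNS := hT S (by omega)
    have hg := HSgauss A (S + 1) (by omega)
    have c1 : ((∑ t ∈ Finset.range (S + 1), min A (t + 1) : ℕ) : ℤ) ≤ a * ((S : ℤ) + 1) + b := by
      rw [← hNS]
      exact_mod_cast hle
    have c2 : ((∑ t ∈ Finset.range (S + 1), min A (t + 1) : ℕ) : ℤ) * 2 + a * a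
        = 2 * a * ((S : ℤ) + 1) + a := by
      have hcast : ((∑ t ∈ Finset.range (S + 1), min A (t + 1) : ℕ) : ℤ) * 2 + (A : ℤ) * A
          = 2 * (A : ℤ) * ((S : ℤ) + 1) + A := by exact_mod_cast hg
      rw [hAa] at hcast
      exact hcast
    refine ⟨hapos, ?_⟩
    rw [hdiv]
    nlinarith [c1, c2, he]
  · rintro ⟨hapos, hb⟩
    rw [hdiv] at hb
    set A : ℕ := a.toNat with hA'
    have hAa : (A : ℤ) = a := Int.toNat_of_nonneg hapos.le
    set k : ℕ := (b + e).toNat with hk'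
    have hka : (k : ℤ) = b + e := Int.toNat_of_nonneg hb
    set E : Set (ℕ × ℕ) := {ν | A < ν.2 ∨ (ν.2 = A ∧ k ≤ ν.1)} with hE'
    have hmem : ∀ ν : ℕ × ℕ, ν ∈ E ↔ A < ν.2 ∨ (ν.2 = A ∧ k ≤ ν.1) := fun ν => Iff.rfl
    refine ⟨E, ⟨(0, A + 1), (hmem _).mpr (Or.inl (by simp))⟩, ?_, ?_⟩
    · intro ν μ hle hν
      have h1 : ν.1 ≤ μ.1 := hle.1
      have h2 : ν.2 ≤ μ.2 := hle.2
      rw [hmem] at hν ⊢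
      omega
    · rw [Filter.eventually_atTop]
      refine ⟨A + k, fun s hs => ?_⟩
      have hd1 : ∀ t, t < A → (HSAset E t).ncard = t + 1 := by
        intro t ht
        have hset : HSAset E t = Set.Iic t := by
          ext i
          simp only [HSAset, Set.mem_setOf_eq, Set.mem_Iic, hE']
          omega
        rw [hset, ← Finset.coe_Iic, Set.ncard_coe_finset, Nat.card_Iic]
      have hd2 : ∀ t, A ≤ t → t < A + k → (HSAset E t).ncard = A + 1 := by
        intro t ht1 ht2
        have hset : HSAset E t = Set.Icc (t - A) t := by
          ext i
          simp only [HSAset, Set.mem_setOf_eq, Set.mem_Icc, hE']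
          omega
        rw [hset, ← Finset.coe_Icc, Set.ncard_coe_finset, Nat.card_Icc]
        omega
      have hd3 : ∀ t, A + k ≤ t → (HSAset E t).ncard = A := by
        intro t ht
        have hset : HSAset E t = Set.Ioc (t - A) t := by
          ext i
          simp only [HSAset, Set.mem_setOf_eq, Set.mem_Ioc, hE']
          omega
        rw [hset, ← Finset.coe_Ioc, Set.ncard_coe_finset, Nat.card_Ioc]
        omega
      rw [HSN_eq_sum]
      have hsplit : ∑ t ∈ Finset.range (s + 1), (HSAset E t).ncard
          = (∑ t ∈ Finset.range A, (HSAset E t).ncard)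
            + (∑ t ∈ Finset.Ico A (A + k), (HSAset E t).ncard)
            + (∑ t ∈ Finset.Ico (A + k) (s + 1), (HSAset E t).ncard) := by
        rw [Finset.range_eq_Ico,
          ← Finset.sum_Ico_consecutive _ (Nat.zero_le (A + k)) (show A + k ≤ s + 1 by omega),
          ← Finset.sum_Ico_consecutive _ (Nat.zero_le A) (show A ≤ A + k by omega),
          ← Finset.range_eq_Ico]
      have hS1 : ∑ t ∈ Finset.range A, (HSAset E t).ncard = ∑ t ∈ Finset.range A, (t + 1) :=
        Finset.sum_congr rfl (fun t ht => hd1 t (Finset.mem_range.mp ht))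
      have hS1v : (∑ t ∈ Finset.range A, (t + 1)) * 2 = (A + 1) * A := by
        have h2 : (∑ t ∈ Finset.range (A + 1), t) * 2 = (A + 1) * A :=
          Finset.sum_range_id_mul_two (A + 1)
        have h3 : ∑ t ∈ Finset.range (A + 1), t = (∑ t ∈ Finset.range A, (t + 1)) + 0 :=
          Finset.sum_range_succ' _ A
        rw [h3, add_zero] at h2
        exact h2
      have hS2 : ∑ t ∈ Finset.Ico A (A + k), (HSAset E t).ncard = k * (A + 1) := by
        rw [Finset.sum_congr rfl (fun t ht => by
          have := Finset.mem_Ico.mp ht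
          exact hd2 t this.1 this.2)]
        rw [Finset.sum_const, Nat.card_Ico, smul_eq_mul, Nat.add_sub_cancel_left]
      have hS3 : ∑ t ∈ Finset.Ico (A + k) (s + 1), (HSAset E t).ncard
          = (s + 1 - (A + k)) * A := by
        rw [Finset.sum_congr rfl (fun t ht => hd3 t (Finset.mem_Ico.mp ht).1)]
        rw [Finset.sum_const, Nat.card_Ico, smul_eq_mul]
      rw [hsplit, hS1, hS2, hS3]
      set S1 : ℕ := ∑ t ∈ Finset.range A, (t + 1) with hS1'
      have hm : ((s + 1 - (A + k) : ℕ) : ℤ) = (s : ℤ) + 1 - A - k := by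
        have h : A + k ≤ s + 1 := by omega
        push_cast [Nat.cast_sub h]
        ring
      have hS1z : (S1 : ℤ) * 2 = ((A : ℤ) + 1) * A := by exact_mod_cast hS1v
      push_cast
      rw [hm, hAa, hka]
      rw [hAa] at hS1z
      have hS1e : (S1 : ℤ) = e + a := by
        have h2 : 2 * (S1 : ℤ) = 2 * (e + a) := by linear_combination hS1z + he
        omega
      linear_combination hS1e - he
end
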